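/- arXiv:1703.02628 — 5 statements merged into one kernel-verified Lean document; each statement's English description precedes it below -/
import Mathlib

section
/- For any compact convex set X ⊂ ℝ^d with nonempty interior, any point x* ∈ X, and any radius r with 0 < r < diam(X), the Lebesgue measure of B(x*, r) ∩ X satisfies μ(B(x*, r) ∩ X) / μ(X) ≥ (r / diam(X))^d. -/
/-! Shrinking `X` towards `x` by the factor `t = r / diam X` keeps it inside `X` by convexity
and puts it inside `B(x, r)`, while scaling its volume by exactly `t ^ d`. -/

open Bornology Metric Set MeasureTheory AffineMap

theorem Convex.image_homothety_subset {𝕜 E : Type*} [Field 𝕜] [LinearOrder 𝕜]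
    [IsStrictOrderedRing 𝕜] [AddCommGroup E] [Module 𝕜 E] {s : Set E} (hs : Convex 𝕜 s)
    {x : E} (hx : x ∈ s) {t : 𝕜} (ht : t ∈ Icc 0 1) : homothety x t '' s ⊆ s := by
  rintro _ ⟨y, hy, rfl⟩
  rw [homothety_eq_lineMap]
  exact hs.lineMap_mem hx hy ht

theorem image_homothety_subset_closedBall_diam {𝕜 V P : Type*} [NormedField 𝕜]
    [SeminormedAddCommGroup V] [NormedSpace 𝕜 V] [PseudoMetricSpace P] [NormedAddTorsor V P]
    {s : Set P} (hs : IsBounded s) {x : P} (hx : x ∈ s) (t : 𝕜) :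
    homothety x t '' s ⊆ closedBall x (‖t‖ * diam s) := by
  rintro _ ⟨y, hy, rfl⟩
  rw [mem_closedBall, dist_homothety_center, dist_comm]
  exact mul_le_mul_of_nonneg_left (dist_le_diam_of_mem hs hy hx) (norm_nonneg t)

theorem Convex.ofReal_pow_finrank_mul_addHaar_le_addHaar_closedBall_inter {E : Type*}
    [NormedAddCommGroup E] [NormedSpace ℝ E] [MeasurableSpace E] [BorelSpace E]
    [FiniteDimensional ℝ E] (μ : Measure E) [μ.IsAddHaarMeasure] {s : Set E}
    (hs : Convex ℝ s) (hb : IsBounded s) {x : E} (hx : x ∈ s) {t : ℝ} (ht : t ∈ Icc 0 1) :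
    ENNReal.ofReal (t ^ Module.finrank ℝ E) * μ s ≤ μ (closedBall x (t * diam s) ∩ s) :=
  calc ENNReal.ofReal (t ^ Module.finrank ℝ E) * μ s = μ (homothety x t '' s) := by
        rw [Measure.addHaar_image_homothety, abs_of_nonneg (pow_nonneg ht.1 _)]
    _ ≤ μ (closedBall x (t * diam s) ∩ s) := by
      refine measure_mono (subset_inter ?_ (hs.image_homothety_subset hx ht))
      simpa only [Real.norm_of_nonneg ht.1] using image_homothety_subset_closedBall_diam hb hx t

theorem stmt2_general (d : ℕ) (X : Set (EuclideanSpace ℝ (Fin d)))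
    (hconv : Convex ℝ X) (hint : (interior X).Nonempty) (x : EuclideanSpace ℝ (Fin d))
    (hx : x ∈ X) (r : ℝ) (hr : 0 < r) (hrd : r < Metric.diam X) :
    ENNReal.ofReal ((r / Metric.diam X) ^ d) ≤
      volume (closedBall x r ∩ X) / volume X := by
  have hdiam : 0 < diam X := hr.trans hrd
  have hbdd : IsBounded X := by_contra fun h => hdiam.ne' (diam_eq_zero_of_unbounded h)
  have hvol : volume X ≠ 0 := (Measure.measure_pos_of_nonempty_interior volume hint).ne'
  rw [ENNReal.le_div_iff_mul_le (Or.inl hvol) (Or.inl hbdd.measure_lt_top.ne)]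
  have hshrink := hconv.ofReal_pow_finrank_mul_addHaar_le_addHaar_closedBall_inter volume hbdd hx
    ⟨div_nonneg hr.le hdiam.le, div_le_one_of_le₀ hrd.le hdiam.le⟩
  rwa [finrank_euclideanSpace_fin, div_mul_cancel₀ _ hdiam.ne'] at hshrink

theorem stmt2 (d : ℕ) (X : Set (EuclideanSpace ℝ (Fin d))) (hXc : IsCompact X)
    (hconv : Convex ℝ X) (hint : (interior X).Nonempty) (x : EuclideanSpace ℝ (Fin d))
    (hx : x ∈ X) (r : ℝ) (hr : 0 < r) (hrd : r < Metric.diam X) :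
    ENNReal.ofReal ((r / Metric.diam X) ^ d) ≤
      volume (closedBall x r ∩ X) / volume X :=
  stmt2_general d X hconv hint x hx r hr hrd
end

section
/- Let X ⊂ ℝ^d be compact and convex, let k ≥ 0, let f : X → ℝ be k-Lipschitz, and let (X_i, f(X_i)), i = 1..t, be any finite sample of evaluations. Then a point x ∈ X satisfies: there exists a k-Lipschitz function g : X → ℝ with g(X_i) = f(X_i) for all i ≤ t and x ∈ argmax g, if and only if min_{i=1..t} (f(X_i) + k‖x − X_i‖₂) ≥ max_{i=1..t} f(X_i). -/
open Metric Set

theorem stmt7 (d t : ℕ) (ht : 1 ≤ t) (X : Set (EuclideanSpace ℝ (Fin d)))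
    (hXc : IsCompact X) (hconv : Convex ℝ X) (hne : X.Nonempty)
    (k : ℝ) (hk : 0 ≤ k) (f : EuclideanSpace ℝ (Fin d) → ℝ)
    (hf : ∀ a ∈ X, ∀ b ∈ X, |f a - f b| ≤ k * dist a b)
    (Xs : Fin t → EuclideanSpace ℝ (Fin d)) (hXs : ∀ i, Xs i ∈ X)
    (x : EuclideanSpace ℝ (Fin d)) (hx : x ∈ X) :
    (∃ g : EuclideanSpace ℝ (Fin d) → ℝ,
        (∀ a ∈ X, ∀ b ∈ X, |g a - g b| ≤ k * dist a b) ∧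
        (∀ i, g (Xs i) = f (Xs i)) ∧ ∀ y ∈ X, g y ≤ g x) ↔
      (⨆ i, f (Xs i)) ≤ ⨅ i, (f (Xs i) + k * dist x (Xs i)) := by
  have hne' : Nonempty (Fin t) := ⟨⟨0, ht⟩⟩
  constructor
  · rintro ⟨g, hg, hgi, hgmax⟩
    apply ciSup_le
    intro i
    apply le_ciInf
    intro j
    have h1 : f (Xs i) = g (Xs i) := (hgi i).symm
    have h2 : g (Xs i) ≤ g x := hgmax _ (hXs i)
    have h3 : g x - g (Xs j) ≤ k * dist x (Xs j) :=
      le_trans (le_abs_self _) (hg x hx _ (hXs j))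
    have := hgi j
    linarith
  · intro h
    set M : ℝ := ⨆ i, f (Xs i) with hM
    refine ⟨fun y => min M (⨅ i, f (Xs i) + k * dist y (Xs i)), ?_, ?_, ?_⟩
    · have key : ∀ a b : EuclideanSpace ℝ (Fin d),
        min M (⨅ i, f (Xs i) + k * dist a (Xs i)) -
          min M (⨅ i, f (Xs i) + k * dist b (Xs i)) ≤ k * dist a b := by
        intro a b
        have hbb : BddBelow (range fun i => f (Xs i) + k * dist b (Xs i)) :=
          (Set.finite_range _).bddBelow
        have hkd : 0 ≤ k * dist a b := mul_nonneg hk dist_nonneg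
        have hA : (⨅ i, f (Xs i) + k * dist a (Xs i)) ≤
            (⨅ i, (f (Xs i) + k * dist b (Xs i)) + k * dist a b) := by
          apply ciInf_mono ((Set.finite_range _).bddBelow)
          intro i
          have := dist_triangle a b (Xs i)
          nlinarith [dist_nonneg (x := a) (y := b)]
        have heq : (⨅ i, (f (Xs i) + k * dist b (Xs i)) + k * dist a b)
            = (⨅ i, f (Xs i) + k * dist b (Xs i)) + k * dist a b := by
          exact (ciInf_add hbb _).symm
        rw [heq] at hA
        have : min M (⨅ i, f (Xs i) + k * dist a (Xs i)) ≤
            min (M + k * dist a b)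
              ((⨅ i, f (Xs i) + k * dist b (Xs i)) + k * dist a b) :=
          min_le_min (by linarith) hA
        rw [min_add_add_right] at this
        linarith
      intro a _ b _
      rw [abs_sub_le_iff]
      exact ⟨key a b, by rw [dist_comm a b]; exact key b a⟩
    · intro j
      have hinf : (⨅ i, f (Xs i) + k * dist (Xs j) (Xs i)) = f (Xs j) := by
        apply le_antisymm
        · have := ciInf_le ((Set.finite_range _).bddBelow)
            (f := fun i => f (Xs i) + k * dist (Xs j) (Xs i)) j
          simpa using this
        · apply le_ciInf
          intro i
          have := le_trans (le_abs_self _) (hf (Xs j) (hXs j) (Xs i) (hXs i))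
          linarith
      have hle : f (Xs j) ≤ M :=
        le_ciSup (f := fun i => f (Xs i)) ((Set.finite_range _).bddAbove) j
      simp [hinf, min_eq_right hle]
    · intro y _
      have hgx : min M (⨅ i, f (Xs i) + k * dist x (Xs i)) = M := min_eq_left h
      simp only []
      rw [hgx]
      exact min_le_left _ _
end

section
/- If U_1,…,U_n are i.i.d. uniform random variables on [0,1], then for any δ ∈ (0,1), P( Σ_{i=1}^n (−ln U_i) > n + √(2n·ln(1/δ)) + ln(1/δ) ) ≤ δ. -/
open MeasureTheory ProbabilityTheory Real
open scoped ENNReal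

/-! Chernoff's method: `-log U` has `E[exp (λ (-log U))] = E[U ^ (-λ)] = (1 - λ)⁻¹` for `λ < 1`,
so by Markov's inequality and independence the tail beyond `t` is at most
`exp (-λ t) (1 - λ)⁻ⁿ`. With `L = log (1/δ)`, `s = √(2L/n)` and `λ = s / (1 + s)` the exponent
is at most `-L`, thanks to `log x ≤ sinh (log x) = (x - x⁻¹) / 2` for `x = 1 + s ≥ 1`. -/

theorem Real.log_le_sub_inv_div_two {x : ℝ} (hx : 1 ≤ x) : log x ≤ (x - x⁻¹) / 2 := by
  rw [← sinh_log (by linarith)]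
  exact self_le_sinh_iff.2 (log_nonneg hx)

theorem measure_lt_le_exp_mul_lintegral_exp {α : Type*} [MeasurableSpace α] {μ : Measure α}
    {f : α → ℝ} (hf : Measurable f) {l : ℝ} (hl : 0 ≤ l) (t : ℝ) :
    μ {x | t < f x} ≤
      ENNReal.ofReal (exp (-(l * t))) * ∫⁻ x, ENNReal.ofReal (exp (l * f x)) ∂μ := by
  have hsub : {x | t < f x} ⊆
      {x | ENNReal.ofReal (exp (l * t)) ≤ ENNReal.ofReal (exp (l * f x))} := fun x hx =>
    ENNReal.ofReal_le_ofReal (exp_le_exp.2 (mul_le_mul_of_nonneg_left (le_of_lt hx) hl))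
  calc μ {x | t < f x}
      ≤ (∫⁻ x, ENNReal.ofReal (exp (l * f x)) ∂μ) / ENNReal.ofReal (exp (l * t)) :=
        (measure_mono hsub).trans <| meas_ge_le_lintegral_div (by fun_prop)
          (by simp [exp_pos]) ENNReal.ofReal_ne_top
    _ = _ := by
        rw [div_eq_mul_inv, mul_comm, ← ENNReal.ofReal_inv_of_pos (exp_pos _), ← exp_neg]

theorem lintegral_pi_prod_eq_pow {ι α : Type*} [Fintype ι] [MeasurableSpace α] {ν : Measure α}
    [IsProbabilityMeasure ν] {g : α → ℝ≥0∞} (hg : Measurable g) :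
    ∫⁻ u, ∏ i, g (u i) ∂Measure.pi (fun _ : ι => ν) = (∫⁻ x, g x ∂ν) ^ Fintype.card ι := by
  refine (lintegral_prod_eq_prod_lintegral_of_indepFun Finset.univ (fun i (u : ι → α) => g (u i))
    (iIndepFun_pi fun _ => hg.aemeasurable) fun i => hg.comp (measurable_pi_apply i)).trans ?_
  simp_rw [(measurePreserving_eval (fun _ => ν) _).lintegral_comp hg]
  rw [Finset.prod_const, Finset.card_univ]

instance isProbabilityMeasure_restrict_Icc_zero_one :
    IsProbabilityMeasure (volume.restrict (Set.Icc (0 : ℝ) 1)) := ⟨by simp⟩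

theorem lintegral_Icc_exp_mul_neg_log {l : ℝ} (hl : l < 1) :
    ∫⁻ x in Set.Icc (0 : ℝ) 1, ENNReal.ofReal (exp (l * -log x)) = ENNReal.ofReal (1 - l)⁻¹ := by
  have hrpow : ∀ x ∈ Set.Ioc (0 : ℝ) 1,
      ENNReal.ofReal (exp (l * -log x)) = ENNReal.ofReal (x ^ (-l)) := by
    intro x hx
    rw [rpow_def_of_pos hx.1]
    ring_nf
  have hint : IntegrableOn (fun x : ℝ => x ^ (-l)) (Set.Ioc 0 1) :=
    (intervalIntegrable_iff_integrableOn_Ioc_of_le zero_le_one).1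
      (intervalIntegral.intervalIntegrable_rpow' (by linarith))
  rw [setLIntegral_congr Ioc_ae_eq_Icc.symm, setLIntegral_congr_fun measurableSet_Ioc hrpow,
    ← ofReal_integral_eq_lintegral_ofReal hint
      ((ae_restrict_mem measurableSet_Ioc).mono fun x hx => rpow_nonneg hx.1.le _),
    ← intervalIntegral.integral_of_le zero_le_one, integral_rpow (Or.inl (by linarith)),
    one_rpow, zero_rpow (by linarith)]
  congr 1
  field_simp
  ring

theorem volume_Icc_pi_lt_sum_neg_log_le {ι : Type*} [Fintype ι] {l : ℝ} (hl₀ : 0 ≤ l)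
    (hl₁ : l < 1) (t : ℝ) :
    Measure.pi (fun _ : ι => volume.restrict (Set.Icc (0 : ℝ) 1)) {u | t < ∑ i, -log (u i)} ≤
      ENNReal.ofReal (exp (-(l * t)) * (1 - l)⁻¹ ^ Fintype.card ι) := by
  have hprod : ∀ u : ι → ℝ, ENNReal.ofReal (exp (l * ∑ i, -log (u i))) =
      ∏ i, ENNReal.ofReal (exp (l * -log (u i))) := fun u => by
    rw [Finset.mul_sum, exp_sum, ENNReal.ofReal_prod_of_nonneg fun i _ => (exp_pos _).le]
  calc _ ≤ ENNReal.ofReal (exp (-(l * t))) * ∫⁻ u, ENNReal.ofReal (exp (l * ∑ i, -log (u i)))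
          ∂Measure.pi (fun _ : ι => volume.restrict (Set.Icc (0 : ℝ) 1)) :=
        measure_lt_le_exp_mul_lintegral_exp (by fun_prop) hl₀ t
    _ = _ := by
        simp_rw [hprod]
        rw [lintegral_pi_prod_eq_pow (g := fun x => ENNReal.ofReal (exp (l * -log x)))
            (by fun_prop), lintegral_Icc_exp_mul_neg_log hl₁,
          ← ENNReal.ofReal_pow (inv_nonneg.2 (by linarith)), ← ENNReal.ofReal_mul (exp_pos _).le]

/-- The Chernoff exponent `-λ t + n log (1 - λ)⁻¹` at `λ = s / (1 + s)`, `t = n + n s + L`. -/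
theorem neg_mul_add_mul_log_one_add_le {n L s : ℝ} (hn : 0 ≤ n) (hs : 0 ≤ s)
    (hL : n * s ^ 2 = 2 * L) :
    -(s / (1 + s) * (n + n * s + L)) + n * log (1 + s) ≤ -L := by
  have hlog :=
    mul_le_mul_of_nonneg_left (Real.log_le_sub_inv_div_two (x := 1 + s) (by linarith)) hn
  have hid : -(s / (1 + s) * (n + n * s + L)) + n * ((1 + s - (1 + s)⁻¹) / 2) = -L := by
    field_simp
    linear_combination -hL
  linarith

theorem stmt13 (n : ℕ) (hn : 1 ≤ n) (δ : ℝ) (hδ : δ ∈ Set.Ioo (0:ℝ) 1) :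
    (Measure.pi fun _ : Fin n => volume.restrict (Set.Icc (0:ℝ) 1))
        {u : Fin n → ℝ |
          (n : ℝ) + Real.sqrt (2 * n * Real.log (1/δ)) + Real.log (1/δ) <
            ∑ i, -Real.log (u i)} ≤ ENNReal.ofReal δ := by
  obtain ⟨hδ₀, hδ₁⟩ := hδ
  have hn₀ : (0 : ℝ) < n := by exact_mod_cast hn
  set L := log (1 / δ)
  have hL : 0 < L := log_pos (by rw [lt_div_iff₀ hδ₀]; linarith)
  set s := √(2 * L / n)
  have hs : 0 ≤ s := sqrt_nonneg _
  have hs2 : n * s ^ 2 = 2 * L := by rw [sq_sqrt (by positivity)]; field_simp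
  have hsqrt : √(2 * n * L) = n * s := by
    rw [show 2 * n * L = n ^ 2 * (2 * L / n) by field_simp, sqrt_mul (sq_nonneg _),
      sqrt_sq hn₀.le]
  have hl : 1 - s / (1 + s) = (1 + s)⁻¹ := by field_simp; ring
  refine (volume_Icc_pi_lt_sum_neg_log_le (l := s / (1 + s)) (by positivity)
    (by rw [div_lt_one (by positivity)]; linarith) _).trans (ENNReal.ofReal_le_ofReal ?_)
  rw [Fintype.card_fin, hl, inv_inv, ← exp_log (pow_pos (by positivity : 0 < 1 + s) n), log_pow,
    ← exp_add, hsqrt, ← exp_log hδ₀, ← neg_neg (log δ), ← log_inv, ← one_div]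
  exact exp_le_exp.2 (neg_mul_add_mul_log_one_add_le hn₀.le hs hs2)
end

section
/- Under the setup of estimating the Lipschitz constant: let f : X → ℝ be Lipschitz and non-constant on a compact convex X ⊂ ℝ^d with nonempty interior, let (k_i)_{i∈ℤ} be a meshgrid of ℝ⁺, let i* = min{i : f ∈ Lip(k_i)}, and let X_1,…,X_t (t ≥ 2) be i.i.d. uniform on X. Define the estimate k̂_t as the smallest k_i such that max_{j≠l} |f(X_j) − f(X_l)|/‖X_j − X_l‖₂ ≤ k_i. Then P(f is k̂_t-Lipschitz) ≥ 1 − (1 − Γ)^⌊t/2⌋, where Γ = P(|f(X) − f(X')| > k_{i*−1}‖X − X'‖₂) > 0 for independent X, X' uniform on X. -/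
open Metric Set MeasureTheory
open scoped ENNReal NNReal

private abbrev Euc (d : ℕ) : Type := EuclideanSpace ℝ (Fin d)

noncomputable def unifOn {d : ℕ} (X : Set (EuclideanSpace ℝ (Fin d))) :
    Measure (EuclideanSpace ℝ (Fin d)) := (volume X)⁻¹ • volume.restrict X

lemma aux_map_pairs {E : Type*} [MeasurableSpace E] (μ : Measure E) [IsProbabilityMeasure μ]
    (m r t : ℕ) (htm : m + m + r = t) :
    ∃ a b : Fin m → Fin t, (∀ j, a j ≠ b j) ∧
      Measure.map (fun (ω : Fin t → E) (j : Fin m) => (ω (a j), ω (b j)))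
          (Measure.pi fun _ : Fin t => μ)
        = Measure.pi (fun _ : Fin m => μ.prod μ) := by
  set e : (Fin m ⊕ Fin m) ⊕ Fin r ≃ Fin t :=
    (Equiv.sumCongr finSumFinEquiv (Equiv.refl (Fin r))).trans
      (finSumFinEquiv.trans (finCongr htm)) with he
  refine ⟨fun j => e (Sum.inl (Sum.inl j)), fun j => e (Sum.inl (Sum.inr j)), ?_, ?_⟩
  · intro j h
    simpa using e.injective h
  · set Φ : (Fin t → E) → (Fin m → E × E) :=
      fun ω j => (ω (e (Sum.inl (Sum.inl j))), ω (e (Sum.inl (Sum.inr j)))) with hΦ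
    have hΦm : Measurable Φ :=
      measurable_pi_lambda _ fun j =>
        ((measurable_pi_apply _).prodMk (measurable_pi_apply _))
    set Ψ : ((Fin m → E) × (Fin m → E)) × (Fin r → E) → (Fin t → E) :=
      fun q => (MeasurableEquiv.piCongrLeft (fun _ : Fin t => E) e)
        ((MeasurableEquiv.sumPiEquivProdPi (fun _ : (Fin m ⊕ Fin m) ⊕ Fin r => E)).symm
          (Prod.map (MeasurableEquiv.sumPiEquivProdPi (fun _ : Fin m ⊕ Fin m => E)).symm id q))
      with hΨ
    have hΨp : MeasurePreserving Ψ
        (((Measure.pi fun _ : Fin m => μ).prod (Measure.pi fun _ : Fin m => μ)).prod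
          (Measure.pi fun _ : Fin r => μ))
        (Measure.pi fun _ : Fin t => μ) := by
      refine ((measurePreserving_piCongrLeft (fun _ : Fin t => μ) e).comp ?_)
      refine ((measurePreserving_sumPiEquivProdPi_symm
        (fun _ : (Fin m ⊕ Fin m) ⊕ Fin r => μ)).comp ?_)
      exact (measurePreserving_sumPiEquivProdPi_symm
        (fun _ : Fin m ⊕ Fin m => μ)).prod (MeasurePreserving.id _)
    have hcomp : Φ ∘ Ψ =
        (fun (p : (Fin m → E) × (Fin m → E)) (j : Fin m) => (p.1 j, p.2 j)) ∘ Prod.fst := by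
      funext q
      funext j
      show (Ψ q (e (Sum.inl (Sum.inl j))), Ψ q (e (Sum.inl (Sum.inr j))))
        = (q.1.1 j, q.1.2 j)
      simp [hΨ, MeasurableEquiv.piCongrLeft_apply_apply, MeasurableEquiv.sumPiEquivProdPi,
        Equiv.sumPiEquivProdPi]
    have harrow : (fun (p : (Fin m → E) × (Fin m → E)) (j : Fin m) => (p.1 j, p.2 j)) =
        ⇑(MeasurableEquiv.arrowProdEquivProdArrow E E (Fin m)).symm := by
      funext p
      rfl
    calc Measure.map Φ (Measure.pi fun _ : Fin t => μ)
        = Measure.map (Φ ∘ Ψ)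
            (((Measure.pi fun _ : Fin m => μ).prod (Measure.pi fun _ : Fin m => μ)).prod
              (Measure.pi fun _ : Fin r => μ)) := by
          rw [← hΨp.map_eq, Measure.map_map hΦm hΨp.measurable]
      _ = Measure.map (fun (p : (Fin m → E) × (Fin m → E)) (j : Fin m) => (p.1 j, p.2 j))
            ((Measure.pi fun _ : Fin m => μ).prod (Measure.pi fun _ : Fin m => μ)) := by
          rw [hcomp, ← Measure.map_map (by rw [harrow]; exact MeasurableEquiv.measurable _)
            measurable_fst, Measure.map_fst_prod]
          simp
      _ = Measure.pi (fun _ : Fin m => μ.prod μ) := by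
          rw [harrow]
          exact ((measurePreserving_arrowProdEquivProdArrow E E (Fin m)
            (fun _ => μ) (fun _ => μ)).symm _).map_eq

theorem stmt15 (d t : ℕ) (ht : 2 ≤ t)
    (X : Set (EuclideanSpace ℝ (Fin d))) (hXc : IsCompact X)
    (hconv : Convex ℝ X) (hint : (interior X).Nonempty)
    (f : EuclideanSpace ℝ (Fin d) → ℝ)
    (hLip : ∃ K ≥ (0:ℝ), ∀ x ∈ X, ∀ y ∈ X, |f x - f y| ≤ K * dist x y)
    (hnc : ∃ a ∈ X, ∃ b ∈ X, f a ≠ f b)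
    (k : ℤ → ℝ) (hpos : ∀ i, 0 < k i) (hmono : Monotone k)
    (hmesh : ∀ x > (0:ℝ), ∃ i : ℤ, k i ≤ x ∧ x ≤ k (i + 1))
    (istar : ℤ)
    (hLipStar : ∀ x ∈ X, ∀ y ∈ X, |f x - f y| ≤ k istar * dist x y)
    (hNotBelow : ¬ ∀ x ∈ X, ∀ y ∈ X, |f x - f y| ≤ k (istar - 1) * dist x y)
    (khat : (Fin t → EuclideanSpace ℝ (Fin d)) → ℝ)
    (hkhat : khat = fun ω => sInf {y : ℝ | ∃ i : ℤ, y = k i ∧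
      ∀ j l : Fin t, j ≠ l → |f (ω j) - f (ω l)| ≤ k i * dist (ω j) (ω l)})
    (Γ : ℝ)
    (hΓ : Γ = (((unifOn X).prod (unifOn X))
        {p : EuclideanSpace ℝ (Fin d) × EuclideanSpace ℝ (Fin d) |
          k (istar - 1) * dist p.1 p.2 < |f p.1 - f p.2|}).toReal) :
    0 < Γ ∧
    1 - ENNReal.ofReal ((1 - Γ) ^ (t / 2)) ≤
      Measure.pi (fun _ : Fin t => unifOn X)
        {ω : Fin t → EuclideanSpace ℝ (Fin d) |
          ∀ x ∈ X, ∀ y ∈ X, |f x - f y| ≤ khat ω * dist x y} := by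
  classical
  have hXmeas : MeasurableSet X := hXc.isClosed.measurableSet
  have hXX : MeasurableSet (X ×ˢ X) := hXmeas.prod hXmeas
  have hvolpos : 0 < volume X := by
    obtain ⟨z, hz⟩ := hint
    exact lt_of_lt_of_le (isOpen_interior.measure_pos volume ⟨z, hz⟩)
      (measure_mono interior_subset)
  have hvolfin : volume X < ⊤ := hXc.measure_lt_top
  set c : ℝ≥0∞ := (volume X)⁻¹ with hc
  have hcfin : c ≠ ⊤ := by simp [hc, hvolpos.ne']
  have hcpos : c ≠ 0 := by simp [hc]; exact hvolfin.ne
  set μ := unifOn X with hμ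
  haveI hμprob : IsProbabilityMeasure μ := by
    constructor
    rw [hμ, unifOn, Measure.smul_apply, Measure.restrict_apply_univ, smul_eq_mul]
    exact ENNReal.inv_mul_cancel hvolpos.ne' hvolfin.ne
  -- product measure representation
  have hprodrep : μ.prod μ = (c * c) • ((volume.prod volume).restrict (X ×ˢ X)) := by
    refine Measure.prod_eq fun s u hs hu => ?_
    rw [Measure.smul_apply, Measure.restrict_apply (hs.prod hu), Set.prod_inter_prod,
      Measure.prod_prod, hμ, unifOn, Measure.smul_apply, Measure.smul_apply,
      Measure.restrict_apply hs, Measure.restrict_apply hu]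
    simp only [smul_eq_mul]
    ring
  have hprodA : ∀ A : Set (Euc d × Euc d),
      μ.prod μ A = (c * c) * (volume.prod volume) (A ∩ X ×ˢ X) := by
    intro A
    rw [hprodrep, Measure.smul_apply, Measure.restrict_apply' hXX, smul_eq_mul]
  -- continuity of f on X
  obtain ⟨K, hK0, hKf⟩ := hLip
  have hfc : ContinuousOn f X := by
    have : LipschitzOnWith (Real.toNNReal K) f X := by
      rw [lipschitzOnWith_iff_dist_le_mul]
      intro x hx y hy
      rw [Real.dist_eq]
      calc |f x - f y| ≤ K * dist x y := hKf x hx y hy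
        _ ≤ Real.toNNReal K * dist x y := by
            exact mul_le_mul_of_nonneg_right (Real.le_coe_toNNReal K) dist_nonneg
    exact this.continuousOn
  set h : Euc d × Euc d → ℝ := fun p => |f p.1 - f p.2| - k (istar - 1) * dist p.1 p.2 with hh
  have hhc : ContinuousOn h (X ×ˢ X) := by
    apply ContinuousOn.sub
    · apply ContinuousOn.abs
      apply ContinuousOn.sub
      · exact hfc.comp continuous_fst.continuousOn fun p hp => hp.1
      · exact hfc.comp continuous_snd.continuousOn fun p hp => hp.2
    · exact continuousOn_const.mul continuous_dist.continuousOn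
  set S : Set (Euc d × Euc d) := {p | k (istar - 1) * dist p.1 p.2 < |f p.1 - f p.2|} with hS
  have hSh : S = h ⁻¹' Ioi 0 := by
    ext p
    simp [hS, hh, sub_pos]
  set W : Set (Euc d × Euc d) := S ∩ X ×ˢ X with hW
  have hWmeas : MeasurableSet W := by
    obtain ⟨u, hu, huW⟩ := (_root_.continuousOn_iff'.1 hhc) (Ioi 0) isOpen_Ioi
    have : W = u ∩ X ×ˢ X := by
      rw [hW, hSh]
      exact huW
    rw [this]
    exact hu.measurableSet.inter hXX
  -- positivity of the witness set
  push_neg at hNotBelow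
  obtain ⟨x₀, hx₀, y₀, hy₀, hxy⟩ := hNotBelow
  obtain ⟨z, hz⟩ := hint
  set p1 : ℝ → Euc d := fun l => x₀ + l • (z - x₀) with hp1
  set p2 : ℝ → Euc d := fun l => y₀ + l • (z - y₀) with hp2
  have hp1X : ∀ l ∈ Icc (0:ℝ) 1, p1 l ∈ X := by
    intro l hl
    have := hconv hx₀ (interior_subset hz) (by linarith [hl.2] : (0:ℝ) ≤ 1 - l) hl.1 (by ring)
    convert this using 1
    rw [hp1]
    simp only [smul_sub]
    module
  have hp2X : ∀ l ∈ Icc (0:ℝ) 1, p2 l ∈ X := by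
    intro l hl
    have := hconv hy₀ (interior_subset hz) (by linarith [hl.2] : (0:ℝ) ≤ 1 - l) hl.1 (by ring)
    convert this using 1
    rw [hp2]
    simp only [smul_sub]
    module
  set φ : ℝ → ℝ := fun l => h (p1 l, p2 l) with hφ
  have hφc : ContinuousWithinAt φ (Icc (0:ℝ) 1) 0 := by
    have hcont : Continuous fun l : ℝ => (p1 l, p2 l) := by
      apply Continuous.prodMk
      · exact continuous_const.add (continuous_id.smul continuous_const)
      · exact continuous_const.add (continuous_id.smul continuous_const)
    have : ContinuousOn φ (Icc (0:ℝ) 1) := by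
      refine hhc.comp hcont.continuousOn ?_
      intro l hl
      exact ⟨hp1X l hl, hp2X l hl⟩
    exact this.continuousWithinAt (by simp : (0:ℝ) ∈ Icc (0:ℝ) 1)
  have hφ0 : 0 < φ 0 := by
    have : p1 0 = x₀ := by simp [hp1]
    have h2 : p2 0 = y₀ := by simp [hp2]
    simp only [hφ, this, h2, hh]
    linarith
  have hev : φ ⁻¹' Ioi 0 ∈ nhdsWithin (0:ℝ) (Icc 0 1) := hφc (Ioi_mem_nhds hφ0)
  have hev2 : φ ⁻¹' Ioi 0 ∈ nhdsWithin (0:ℝ) (Ioc 0 1) :=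
    nhdsWithin_mono 0 Ioc_subset_Icc_self hev
  haveI : Filter.NeBot (nhdsWithin (0:ℝ) (Ioc 0 1)) :=
    left_nhdsWithin_Ioc_neBot (by norm_num)
  obtain ⟨l, hlφ, hlI⟩ := Filter.nonempty_of_mem (Filter.inter_mem hev2 self_mem_nhdsWithin)
  have hx₁ : p1 l ∈ interior X := by
    have := hconv.add_smul_sub_mem_interior hx₀ hz hlI
    exact this
  have hy₁ : p2 l ∈ interior X := hconv.add_smul_sub_mem_interior hy₀ hz hlI
  set U : Set (Euc d × Euc d) := (interior X ×ˢ interior X) ∩ h ⁻¹' Ioi 0 with hU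
  have hUopen : IsOpen U := by
    refine ContinuousOn.isOpen_inter_preimage ?_ (isOpen_interior.prod isOpen_interior) isOpen_Ioi
    exact hhc.mono (Set.prod_mono interior_subset interior_subset)
  have hUW : U ⊆ W := by
    rintro p ⟨hpi, hph⟩
    refine ⟨?_, interior_subset hpi.1, interior_subset hpi.2⟩
    rw [hSh]; exact hph
  have hUne : U.Nonempty := ⟨(p1 l, p2 l), ⟨hx₁, hy₁⟩, hlφ⟩
  have hvolW : 0 < (volume.prod volume) W := by
    refine lt_of_lt_of_le ?_ (measure_mono hUW)
    exact hUopen.measure_pos _ hUne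
  -- Γ positivity
  have hSW : S ∩ X ×ˢ X = W := rfl
  have hmuS : μ.prod μ S = (c * c) * (volume.prod volume) W := by
    rw [hprodA S, hSW]
  have hmuSpos : 0 < μ.prod μ S := by
    rw [hmuS]
    exact ENNReal.mul_pos (mul_ne_zero hcpos hcpos) hvolW.ne'
  haveI : IsProbabilityMeasure (μ.prod μ) := by infer_instance
  have hmuSfin : μ.prod μ S ≠ ⊤ := (measure_lt_top _ _).ne
  have hΓpos : 0 < Γ := by
    rw [hΓ]
    exact ENNReal.toReal_pos hmuSpos.ne' hmuSfin
  have hΓle : Γ ≤ 1 := by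
    rw [hΓ]
    have := prob_le_one (μ := μ.prod μ) (s := S)
    calc (μ.prod μ S).toReal ≤ (1 : ℝ≥0∞).toReal := ENNReal.toReal_mono (by simp) this
      _ = 1 := by simp
  have hSof : μ.prod μ S = ENNReal.ofReal Γ := by
    rw [hΓ, ENNReal.ofReal_toReal hmuSfin]
  -- the complement set C
  set C : Set (Euc d × Euc d) := (X ×ˢ X) \ W with hC
  have hCmeas : MeasurableSet C := hXX.diff hWmeas
  have hWsub : W ⊆ X ×ˢ X := Set.inter_subset_right
  have hmuW : μ.prod μ W = μ.prod μ S := by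
    rw [hprodA W, hprodA S, hSW, Set.inter_eq_self_of_subset_left hWsub]
  have hμX1 : μ X = 1 := by
    rw [hμ, unifOn, Measure.smul_apply, Measure.restrict_apply_self, smul_eq_mul]
    exact ENNReal.inv_mul_cancel hvolpos.ne' hvolfin.ne
  have hXX1 : μ.prod μ (X ×ˢ X) = 1 := by
    rw [Measure.prod_prod, hμX1, mul_one]
  have hmuC : μ.prod μ C = 1 - ENNReal.ofReal Γ := by
    rw [hC, measure_diff hWsub hWmeas.nullMeasurableSet (ne_top_of_lt (measure_lt_top _ _)),
      hXX1, hmuW, hSof]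
  have hofR : ENNReal.ofReal (1 - Γ) = 1 - ENNReal.ofReal Γ := by
    rw [ENNReal.ofReal_sub 1 hΓpos.le, ENNReal.ofReal_one]
  -- pairing
  set m := t / 2 with hm
  have hmm : m + m + (t - (m + m)) = t := by omega
  obtain ⟨a, b, hab, hmap⟩ := aux_map_pairs μ m (t - (m + m)) t hmm
  set π := Measure.pi (fun _ : Fin t => μ) with hπ
  set Φ : (Fin t → Euc d) → (Fin m → Euc d × Euc d) := fun ω j => (ω (a j), ω (b j)) with hΦ
  have hΦm : Measurable Φ :=
    measurable_pi_lambda _ fun j => ((measurable_pi_apply _).prodMk (measurable_pi_apply _))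
  set D : Set (Fin t → Euc d) := Φ ⁻¹' (univ.pi fun _ : Fin m => C) with hD
  have hDmeas : MeasurableSet D := hΦm (MeasurableSet.univ_pi fun _ => hCmeas)
  have hπD : π D = ENNReal.ofReal ((1 - Γ) ^ m) := by
    rw [hD, ← Measure.map_apply hΦm (MeasurableSet.univ_pi fun _ => hCmeas), hΦ, hmap,
      Measure.pi_pi]
    simp only [Finset.prod_const, Finset.card_univ, Fintype.card_fin]
    rw [hmuC, ← hofR, ← ENNReal.ofReal_pow (by linarith)]
  set H : Set (Fin t → Euc d) := univ.pi fun _ : Fin t => X with hHdef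
  have hHmeas : MeasurableSet H := MeasurableSet.univ_pi fun _ => hXmeas
  have hπH : π H = 1 := by
    rw [hHdef, hπ, Measure.pi_pi]
    simp [hμX1]
  -- inclusion
  have hsub : H \ D ⊆ {ω : Fin t → Euc d | ∀ x ∈ X, ∀ y ∈ X, |f x - f y| ≤ khat ω * dist x y} := by
    rintro ω ⟨hωH, hωD⟩
    have hωX : ∀ i, ω i ∈ X := fun i => hωH i (mem_univ i)
    rw [hD, Set.mem_preimage, Set.mem_univ_pi] at hωD
    push_neg at hωD
    obtain ⟨j, hj⟩ := hωD
    have hjS : (ω (a j), ω (b j)) ∈ S := by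
      have hmem : (ω (a j), ω (b j)) ∈ X ×ˢ X := ⟨hωX _, hωX _⟩
      by_contra hnS
      exact hj ⟨hmem, fun hWm => hnS hWm.1⟩
    rw [hS] at hjS
    simp only [Set.mem_setOf_eq] at hjS
    intro x hx y hy
    have hstar_le : k istar ≤ khat ω := by
      rw [hkhat]
      apply le_csInf
      · exact ⟨k istar, istar, rfl, fun j' l' _ => hLipStar _ (hωX j') _ (hωX l')⟩
      · rintro yv ⟨i, rfl, hi⟩
        have hpair := hi (a j) (b j) (hab j)
        have hdpos : 0 < dist (ω (a j)) (ω (b j)) := by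
          rcases lt_or_eq_of_le (dist_nonneg (x := ω (a j)) (y := ω (b j))) with hd | hd
          · exact hd
          · exfalso
            rw [← hd, mul_zero] at hjS hpair
            linarith
        have hki : k (istar - 1) < k i :=
          lt_of_mul_lt_mul_right (lt_of_lt_of_le hjS hpair) dist_nonneg
        have : istar ≤ i := by
          by_contra hlt
          push_neg at hlt
          exact absurd (hmono (by omega : i ≤ istar - 1)) (not_le.2 hki)
        exact hmono this
    calc |f x - f y| ≤ k istar * dist x y := hLipStar x hx y hy
      _ ≤ khat ω * dist x y := mul_le_mul_of_nonneg_right hstar_le dist_nonneg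
  refine ⟨hΓpos, ?_⟩
  calc (1:ℝ≥0∞) - ENNReal.ofReal ((1 - Γ) ^ (t / 2)) = π H - π D := by rw [hπH, hπD, hm]
    _ ≤ π (H \ D) := le_measure_diff
    _ ≤ π {ω : Fin t → Euc d | ∀ x ∈ X, ∀ y ∈ X, |f x - f y| ≤ khat ω * dist x y} :=
        measure_mono hsub
end

section
/- For any sequential optimization algorithm and any n ≥ 1 and δ ∈ (0,1): partition a hypercube of side 2·rad(X)/√d contained in X into N^d congruent subcubes with N = ⌈(n/δ)^{1/d}⌉, and let X_1,…,X_n be the evaluation points the algorithm produces on the zero function. Then there exists a subcube H* (depending only on the algorithm, n, δ) such that with probability at least 1 − δ, none of X_1,…,X_n lies in the interior of H*. -/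
open Metric Set MeasureTheory

noncomputable def rad {d : ℕ} (X : Set (EuclideanSpace ℝ (Fin d))) : ℝ :=
  sSup {r : ℝ | 0 < r ∧ ∃ x, Metric.closedBall x r ⊆ X}

theorem stmt16 (d n : ℕ) (hd : 1 ≤ d) (hn : 1 ≤ n) (δ : ℝ) (hδ : δ ∈ Set.Ioo (0:ℝ) 1)
    (X : Set (EuclideanSpace ℝ (Fin d))) (hXc : IsCompact X) (hconv : Convex ℝ X)
    (hint : (interior X).Nonempty)
    (x0 : EuclideanSpace ℝ (Fin d))
    (hcube : {x : EuclideanSpace ℝ (Fin d) |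
        ∀ j, x j ∈ Set.Icc (x0 j) (x0 j + 2 * rad X / Real.sqrt d)} ⊆ X)
    (Ω : Type*) [MeasurableSpace Ω] (P : Measure Ω) [IsProbabilityMeasure P]
    (Xs : Fin n → Ω → EuclideanSpace ℝ (Fin d)) (hmeas : ∀ i, Measurable (Xs i)) :
    ∃ I : Fin d → Fin ⌈((n:ℝ)/δ) ^ ((1:ℝ)/d)⌉₊,
      1 - ENNReal.ofReal δ ≤
        P {ω | ∀ i, Xs i ω ∉ interior
          {x : EuclideanSpace ℝ (Fin d) | ∀ j,
            x j ∈ Set.Icc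
              (x0 j + (I j : ℝ) * ((2 * rad X / Real.sqrt d) / ⌈((n:ℝ)/δ) ^ ((1:ℝ)/d)⌉₊))
              (x0 j + ((I j : ℝ) + 1) * ((2 * rad X / Real.sqrt d) / ⌈((n:ℝ)/δ) ^ ((1:ℝ)/d)⌉₊))}} := by
  classical
  obtain ⟨hδ0, hδ1⟩ := hδ
  set N : ℕ := ⌈((n:ℝ)/δ) ^ ((1:ℝ)/d)⌉₊ with hNdef
  set ℓ : ℝ := (2 * rad X / Real.sqrt d) / N with hℓdef
  have hrad : 0 ≤ rad X := Real.sSup_nonneg (fun r hr => le_of_lt hr.1)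
  have hℓ0 : 0 ≤ ℓ := by
    apply div_nonneg (div_nonneg (by linarith) (Real.sqrt_nonneg _)) (Nat.cast_nonneg _)
  have hd0 : (0:ℝ) < d := by exact_mod_cast hd
  have hnδ : (0:ℝ) < (n:ℝ)/δ := by positivity
  have hNpos : 0 < N := Nat.ceil_pos.mpr (Real.rpow_pos_of_pos hnδ _)
  haveI : Nonempty (Fin N) := ⟨⟨0, hNpos⟩⟩
  -- the boxes
  set H : (Fin d → Fin N) → Set (EuclideanSpace ℝ (Fin d)) :=
    fun I => {x | ∀ j, x j ∈ Set.Icc (x0 j + (I j : ℝ) * ℓ) (x0 j + ((I j : ℝ) + 1) * ℓ)}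
    with hHdef
  -- interiors are inside open boxes
  have hIoo : ∀ I, ∀ x ∈ interior (H I), ∀ j,
      x j ∈ Set.Ioo (x0 j + (I j : ℝ) * ℓ) (x0 j + ((I j : ℝ) + 1) * ℓ) := by
    intro I x hx j
    obtain ⟨ε, hε, hball⟩ := Metric.isOpen_iff.1 isOpen_interior x hx
    have key : ∀ t : ℝ, |t| < ε →
        x j + t ∈ Set.Icc (x0 j + (I j : ℝ) * ℓ) (x0 j + ((I j : ℝ) + 1) * ℓ) := by
      intro t ht
      have hmem : x + t • EuclideanSpace.single j (1:ℝ) ∈ H I := by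
        apply interior_subset
        apply hball
        rw [Metric.mem_ball, dist_eq_norm]
        simpa [norm_smul, EuclideanSpace.norm_single] using ht
      have := hmem j
      simpa [EuclideanSpace.single_apply] using this
    have h1 := key (ε/2) (by rw [abs_of_pos (by linarith)]; linarith)
    have h2 := key (-(ε/2)) (by rw [abs_neg, abs_of_pos (by linarith)]; linarith)
    constructor
    · have := h2.1; linarith
    · have := h1.2; linarith
  -- disjointness of interiors
  have hdisj : Pairwise (Function.onFun Disjoint (fun I => interior (H I))) := by
    intro I I' hne
    rw [Function.onFun, Set.disjoint_left]
    intro x hxI hxI'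
    apply hne
    funext j
    have h1 := hIoo I x hxI j
    have h2 := hIoo I' x hxI' j
    by_contra hj
    rcases Nat.lt_or_ge (I j : ℕ) (I' j : ℕ) with hlt | hge
    · have hk : ((I j : ℕ) : ℝ) + 1 ≤ ((I' j : ℕ) : ℝ) := by exact_mod_cast hlt
      nlinarith [h1.2, h2.1, mul_le_mul_of_nonneg_right hk hℓ0]
    · have hlt' : (I' j : ℕ) < (I j : ℕ) := by
        rcases lt_or_eq_of_le hge with h | h
        · exact h
        · exact absurd (Fin.ext h.symm) hj
      have hk : ((I' j : ℕ) : ℝ) + 1 ≤ ((I j : ℕ) : ℝ) := by exact_mod_cast hlt'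
      nlinarith [h2.2, h1.1, mul_le_mul_of_nonneg_right hk hℓ0]
  -- events
  set B : Fin n → (Fin d → Fin N) → Set Ω := fun i I => Xs i ⁻¹' interior (H I) with hBdef
  have hBmeas : ∀ i I, MeasurableSet (B i I) :=
    fun i I => (hmeas i) isOpen_interior.measurableSet
  have hsum_i : ∀ i, ∑ I : Fin d → Fin N, P (B i I) ≤ 1 := by
    intro i
    have := sum_measure_le_measure_univ (μ := P) (s := Finset.univ)
      (t := fun I => B i I)
      (fun I _ => (hBmeas i I).nullMeasurableSet)
      (fun I _ I' _ hne => ((hdisj hne).preimage (Xs i)).aedisjoint)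
    simpa using this
  -- pigeonhole in ℝ
  have hPne : ∀ (s : Set Ω), P s ≠ ⊤ := fun s => measure_ne_top P s
  set p : (Fin d → Fin N) → ℝ := fun I => (P (⋃ i, B i I)).toReal with hpdef
  have hsum_p : ∑ I : Fin d → Fin N, p I ≤ (n : ℝ) := by
    have h1 : ∀ I, p I ≤ ∑ i, (P (B i I)).toReal := by
      intro I
      have h := measure_iUnion_fintype_le P (fun i => B i I)
      have h2 : (P (⋃ i, B i I)).toReal ≤ (∑ i, P (B i I)).toReal := by
        apply ENNReal.toReal_mono _ h
        exact (ENNReal.sum_ne_top).2 (fun i _ => hPne _)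
      rw [ENNReal.toReal_sum (fun i _ => hPne _)] at h2
      exact h2
    calc ∑ I, p I ≤ ∑ I, ∑ i, (P (B i I)).toReal := Finset.sum_le_sum (fun I _ => h1 I)
      _ = ∑ i, ∑ I, (P (B i I)).toReal := Finset.sum_comm
      _ ≤ ∑ _i : Fin n, (1:ℝ) := by
          apply Finset.sum_le_sum
          intro i _
          have := hsum_i i
          have h2 : (∑ I, P (B i I)).toReal ≤ (1 : ENNReal).toReal :=
            ENNReal.toReal_mono (by simp) this
          rw [ENNReal.toReal_sum (fun I _ => hPne _)] at h2
          simpa using h2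
      _ = (n : ℝ) := by simp [Finset.sum_const, Finset.card_univ]
  -- n ≤ N^d * δ
  have hcard : (n : ℝ) ≤ (N:ℝ)^d * δ := by
    have h1 : ((n:ℝ)/δ) ≤ (N:ℝ)^d := by
      have h2 : ((n:ℝ)/δ) = (((n:ℝ)/δ) ^ ((1:ℝ)/d))^d := by
        rw [← Real.rpow_natCast (((n:ℝ)/δ) ^ ((1:ℝ)/d)) d, ← Real.rpow_mul (le_of_lt hnδ),
          one_div, inv_mul_cancel₀ (ne_of_gt hd0), Real.rpow_one]
      rw [h2]
      exact pow_le_pow_left₀ (Real.rpow_nonneg (le_of_lt hnδ) _) (Nat.le_ceil _) d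
    calc (n:ℝ) = ((n:ℝ)/δ) * δ := by field_simp
      _ ≤ (N:ℝ)^d * δ := mul_le_mul_of_nonneg_right h1 (le_of_lt hδ0)
  -- find a good box
  have hexists : ∃ I : Fin d → Fin N, p I ≤ δ := by
    by_contra hcon
    push_neg at hcon
    have hlt : ∑ _I : Fin d → Fin N, δ < ∑ I, p I :=
      Finset.sum_lt_sum_of_nonempty Finset.univ_nonempty (fun I _ => hcon I)
    rw [Finset.sum_const, Finset.card_univ, Fintype.card_fun, Fintype.card_fin,
      Fintype.card_fin, nsmul_eq_mul] at hlt
    push_cast at hlt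
    linarith
  obtain ⟨I, hI⟩ := hexists
  refine ⟨I, ?_⟩
  have hset : {ω | ∀ i, Xs i ω ∉ interior (H I)} = (⋃ i, B i I)ᶜ := by
    ext ω
    simp [hBdef, Set.mem_iUnion]
  have hgoal : 1 - ENNReal.ofReal δ ≤ P {ω | ∀ i, Xs i ω ∉ interior (H I)} := by
    rw [hset, prob_compl_eq_one_sub (MeasurableSet.iUnion (fun i => hBmeas i I))]
    apply tsub_le_tsub_left
    calc P (⋃ i, B i I) = ENNReal.ofReal (p I) := by
          rw [hpdef]; exact (ENNReal.ofReal_toReal (hPne _)).symm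
      _ ≤ ENNReal.ofReal δ := ENNReal.ofReal_le_ofReal hI
  exact hgoal
end
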